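/- arXiv:2603.17469 — 2 statements merged into one kernel-verified Lean document; each statement's English description precedes it below -/
import Mathlib

section
/- Under the block-primitivity assumption, there exist constants C > 0 and ρ₀ ∈ (0,1), depending only on N, l, ε, m and M (in particular independent of the bandwidth k, the length T, the particular transition matrices Γ^(t), the emission weights f_t(j) and the initial vectors δ and ρ), such that |ℓ_T − ℓ̃_T| ≤ T · C · ρ₀^k. -/
open Finset

/-- A probability (row) vector in `ℝ^N`. -/
def IsProbVec {N : ℕ} (v : Fin N → ℝ) : Prop :=
  (∀ i, 0 ≤ v i) ∧ ∑ i, v i = 1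

/-- A row-stochastic `N × N` real matrix. -/
def IsRowStochastic {N : ℕ} (A : Matrix (Fin N) (Fin N) ℝ) : Prop :=
  (∀ i j, 0 ≤ A i j) ∧ ∀ i, ∑ j, A i j = 1

/-- Normalize a vector to sum one (dividing by the sum of its entries). -/
noncomputable def probNormalize {N : ℕ} (v : Fin N → ℝ) : Fin N → ℝ :=
  fun j => v j / ∑ i, v i

/-- The unnormalized forward update `v ↦ v Γ P` with `P = diag(w)`. -/
def fwdVec {N : ℕ} (A : Matrix (Fin N) (Fin N) ℝ) (w : Fin N → ℝ) (v : Fin N → ℝ) :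
    Fin N → ℝ :=
  fun j => (∑ i, v i * A i j) * w j

/-- `fwdRun Γ w start v n` is the scaled forward variable at time `start + n`
obtained by initializing the scaled forward recursion with vector `v` at time
`start` (each step from time `τ - 1` to `τ` uses `Γ τ` and weights `w τ`). -/
noncomputable def fwdRun {N : ℕ} (Γ : ℕ → Matrix (Fin N) (Fin N) ℝ)
    (w : ℕ → Fin N → ℝ) (start : ℕ) (v : Fin N → ℝ) : ℕ → Fin N → ℝ
  | 0 => v
  | n + 1 =>
      probNormalize
        (fwdVec (Γ (start + n + 1)) (w (start + n + 1)) (fwdRun Γ w start v n))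

/-- The scaled forward variable `φ_t` (for `t = 1, …, T`):
`φ_1 = δ P_1 / (δ P_1 1ᵀ)` and `φ_t = φ_{t-1} Γ^(t) P_t / (φ_{t-1} Γ^(t) P_t 1ᵀ)`. -/
noncomputable def phi {N : ℕ} (δ : Fin N → ℝ) (Γ : ℕ → Matrix (Fin N) (Fin N) ℝ)
    (w : ℕ → Fin N → ℝ) (t : ℕ) : Fin N → ℝ :=
  fwdRun Γ w 1 (probNormalize (fun j => δ j * w 1 j)) (t - 1)

/-- The normalizing constant `v Γ^(t) P_t 1ᵀ`. -/
def contrib {N : ℕ} (Γ : ℕ → Matrix (Fin N) (Fin N) ℝ) (w : ℕ → Fin N → ℝ)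
    (v : Fin N → ℝ) (t : ℕ) : ℝ :=
  ∑ j, (∑ i, v i * Γ t i j) * w t j

/-- The exact HMM log-likelihood
`ℓ_T = log (δ P_1 1ᵀ) + ∑_{t=2}^T log (φ_{t-1} Γ^(t) P_t 1ᵀ)`. -/
noncomputable def loglik {N : ℕ} (δ : Fin N → ℝ) (Γ : ℕ → Matrix (Fin N) (Fin N) ℝ)
    (w : ℕ → Fin N → ℝ) (T : ℕ) : ℝ :=
  Real.log (∑ j, δ j * w 1 j)
    + ∑ t ∈ Finset.Icc 2 T, Real.log (contrib Γ w (phi δ Γ w (t - 1)) t)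

/-- The banded (bandwidth-`k`) HMM log-likelihood: the first two blocks are exact,
and for blocks `b ≥ 3` the forward recursion is re-initialized with the fixed
probability vector `ρ` at time `t_{b-1} = (b-2)k`. -/
noncomputable def bandedLoglik {N : ℕ} (δ ρ : Fin N → ℝ)
    (Γ : ℕ → Matrix (Fin N) (Fin N) ℝ) (w : ℕ → Fin N → ℝ) (k B : ℕ) : ℝ :=
  Real.log (∑ j, δ j * w 1 j)
    + ∑ t ∈ Finset.Icc 2 (2 * k), Real.log (contrib Γ w (phi δ Γ w (t - 1)) t)
    + ∑ b ∈ Finset.Icc 3 B, ∑ t ∈ Finset.Icc ((b - 1) * k + 1) (b * k),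
        Real.log (contrib Γ w (fwdRun Γ w ((b - 2) * k) ρ (t - 1 - (b - 2) * k)) t)

/-- The product `Γ^(t) Γ^(t+1) ⋯ Γ^(t+l-1)` of `l` consecutive transition matrices. -/
noncomputable def matProd {N : ℕ} (Γ : ℕ → Matrix (Fin N) (Fin N) ℝ) (t l : ℕ) :
    Matrix (Fin N) (Fin N) ℝ :=
  ((List.range l).map fun s => Γ (t + s)).prod

/-!
Unrolling the normalisations, the filter started from `v` at time `s` is, after `n` steps,
`v ᵥ* S` renormalised, where `S` is the product of the matrices `Γ^(τ) P_τ`. On a block of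
`l` steps block primitivity and `m ≤ f ≤ M` put every entry of `S` between `σ M^l` and `M^l`
with `σ = min (m^l ε / M^l) (1/2)`. Two vectors `x, y` with `a y ≤ x ≤ b y` keep such ratio
bounds after multiplication by a nonnegative matrix, and a block with entries in `[σ c, c]`
shrinks the gap `b - a` by the factor `1 - σ²` (a form of Birkhoff's contraction); the first
block alone already yields the bounds `σ, σ⁻¹`. Hence, after the `⌊k/l⌋` complete blocks that
precede every truncated term, the exact and the truncated filters have ratio bounds `a ≥ σ`
with `b - a ≤ (1 - σ²)^⌊k/l⌋ / σ`, and the two log normalising constants differ by at most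
`log (b/a) ≤ σ⁻² (1 - σ²)^⌊k/l⌋` (by `log M - log m` when `k < l`). With
`ρ₀ = (1 - σ²)^(1/l)` this is `O(ρ₀^k)`, and at most `T` terms differ.
-/

open Matrix

theorem mul_apply_le_mul_apply {ι κ ν : Type*} [Fintype κ] {A A' : Matrix ι κ ℝ}
    {B B' : Matrix κ ν ℝ} (hA : ∀ i j, 0 ≤ A i j) (hAA' : ∀ i j, A i j ≤ A' i j)
    (hB : ∀ i j, 0 ≤ B i j) (hBB' : ∀ i j, B i j ≤ B' i j) (i : ι) (k : ν) :
    (A * B) i k ≤ (A' * B') i k :=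
  sum_le_sum fun j _ => mul_le_mul (hAA' i j) (hBB' j k) (hB j k) ((hA i j).trans (hAA' i j))

section Nonneg

variable {ι κ : Type*} [Fintype ι]

theorem sum_mul_mem_Icc {y f : ι → ℝ} {lo hi : ℝ} (hy : ∀ i, 0 ≤ y i)
    (hf : ∀ i, lo ≤ f i ∧ f i ≤ hi) :
    ∑ i, y i * f i ∈ Set.Icc (lo * ∑ i, y i) (hi * ∑ i, y i) := by
  rw [mul_sum, mul_sum]
  exact ⟨sum_le_sum fun i _ => by rw [mul_comm]; exact mul_le_mul_of_nonneg_left (hf i).1 (hy i),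
    sum_le_sum fun i _ => by rw [mul_comm hi]; exact mul_le_mul_of_nonneg_left (hf i).2 (hy i)⟩

theorem vecMul_le_vecMul {y : ι → ℝ} (hy : ∀ i, 0 ≤ y i) {A A' : Matrix ι κ ℝ}
    (hAA' : ∀ i j, A i j ≤ A' i j) (j : κ) : (y ᵥ* A) j ≤ (y ᵥ* A') j :=
  sum_le_sum fun i _ => mul_le_mul_of_nonneg_left (hAA' i j) (hy i)

theorem vecMul_nonneg {y : ι → ℝ} (hy : ∀ i, 0 ≤ y i) {A : Matrix ι κ ℝ}
    (hA : ∀ i j, 0 ≤ A i j) (j : κ) : 0 ≤ (y ᵥ* A) j :=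
  sum_nonneg fun i _ => mul_nonneg (hy i) (hA i j)

theorem vecMul_pos {y : ι → ℝ} (hy : ∀ i, 0 ≤ y i) (hysum : 0 < ∑ i, y i) {lo : ℝ}
    (hlo : 0 < lo) {B : Matrix ι κ ℝ} (hB : ∀ i j, lo ≤ B i j) (j : κ) : 0 < (y ᵥ* B) j :=
  (mul_pos hlo hysum).trans_le <| by
    rw [mul_sum]
    exact sum_le_sum fun i _ => by rw [mul_comm]; exact mul_le_mul_of_nonneg_left (hB i j) (hy i)

def RatioBetween {ι : Type*} (a b : ℝ) (x y : ι → ℝ) : Prop :=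
  ∀ i, a * y i ≤ x i ∧ x i ≤ b * y i

namespace RatioBetween

variable {a b : ℝ} {x y : ι → ℝ}

theorem dotProduct (h : RatioBetween a b x y) {z : ι → ℝ} (hz : ∀ i, 0 ≤ z i) :
    x ⬝ᵥ z ∈ Set.Icc (a * (y ⬝ᵥ z)) (b * (y ⬝ᵥ z)) := by
  simp only [_root_.dotProduct, mul_sum, ← mul_assoc]
  exact ⟨sum_le_sum fun i _ => mul_le_mul_of_nonneg_right (h i).1 (hz i),
    sum_le_sum fun i _ => mul_le_mul_of_nonneg_right (h i).2 (hz i)⟩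

theorem sum (h : RatioBetween a b x y) :
    ∑ i, x i ∈ Set.Icc (a * ∑ i, y i) (b * ∑ i, y i) := by
  simpa [dotProduct_one] using h.dotProduct (z := 1) fun _ => zero_le_one

theorem vecMul (h : RatioBetween a b x y) {A : Matrix ι κ ℝ} (hA : ∀ i j, 0 ≤ A i j) :
    RatioBetween a b (x ᵥ* A) (y ᵥ* A) :=
  fun j => h.dotProduct fun i => hA i j

/-- A Birkhoff-type contraction step: for `t = σ ^ 2 * (y ᵥ* B) j / (y ᵥ* B) j'` the vector
`B i j - t * B i j'` is nonnegative, and testing `x ≤ b • y` against it gives the bound. -/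
theorem vecMul_div_le (h : RatioBetween a b x y) (hy : ∀ i, 0 ≤ y i) (hysum : 0 < ∑ i, y i)
    {σ c : ℝ} (hσ : 0 < σ) (hc : 0 < c) {B : Matrix ι κ ℝ}
    (hB : ∀ i j, σ * c ≤ B i j ∧ B i j ≤ c) (j j' : κ) :
    (x ᵥ* B) j / (y ᵥ* B) j ≤ (1 - σ ^ 2) * b + σ ^ 2 * ((x ᵥ* B) j' / (y ᵥ* B) j') := by
  have hyB : ∀ j, (y ᵥ* B) j ∈ Set.Icc (σ * c * ∑ i, y i) (c * ∑ i, y i) :=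
    fun j => sum_mul_mem_Icc hy fun i => hB i j
  have hpos := vecMul_pos hy hysum (mul_pos hσ hc) fun i j => (hB i j).1
  set t := σ ^ 2 * (y ᵥ* B) j / (y ᵥ* B) j' with ht
  have ht0 : 0 ≤ t := by have := hpos j; have := hpos j'; positivity
  have hz : ∀ i, 0 ≤ B i j - t * B i j' := by
    intro i
    have htc : t * c ≤ σ * c := by
      have hσy : σ * (y ᵥ* B) j ≤ (y ᵥ* B) j' := by
        nlinarith [mul_le_mul_of_nonneg_left (hyB j).2 hσ.le, (hyB j').1]
      rw [ht, div_mul_eq_mul_div, div_le_iff₀ (hpos j')]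
      nlinarith [mul_le_mul_of_nonneg_left hσy (mul_pos hσ hc).le]
    nlinarith [mul_le_mul_of_nonneg_left (hB i j').2 ht0, (hB i j).1]
  have hcol : ∀ v : ι → ℝ,
      v ⬝ᵥ (fun i => B i j - t * B i j') = (v ᵥ* B) j - t * (v ᵥ* B) j' := by
    intro v
    simp only [_root_.dotProduct, Matrix.vecMul, mul_sub, sum_sub_distrib, mul_sum]
    congr 1
    exact sum_congr rfl fun i _ => by ring
  have key := (h.dotProduct hz).2
  rw [hcol, hcol] at key
  have hty : t * (y ᵥ* B) j' = σ ^ 2 * (y ᵥ* B) j := by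
    rw [ht]; field_simp [(hpos j').ne']
  have htx : t * (x ᵥ* B) j' = σ ^ 2 * ((x ᵥ* B) j' / (y ᵥ* B) j') * (y ᵥ* B) j := by
    rw [ht]; field_simp [(hpos j').ne']
  rw [hty, htx] at key
  rw [div_le_iff₀ (hpos j)]
  linarith

theorem exists_contract (h : RatioBetween a b x y) (hy : ∀ i, 0 ≤ y i) (hysum : 0 < ∑ i, y i)
    {σ c : ℝ} (hσ : 0 < σ) (hσ₁ : σ ≤ 1) (hc : 0 < c) {B : Matrix ι ι ℝ}
    (hB : ∀ i j, σ * c ≤ B i j ∧ B i j ≤ c) :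
    ∃ a' b', a ≤ a' ∧ a' ≤ b' ∧ b' - a' ≤ (1 - σ ^ 2) * (b - a) ∧
      RatioBetween a' b' (x ᵥ* B) (y ᵥ* B) := by
  have : Nonempty ι := univ_nonempty_iff.mp (nonempty_of_sum_ne_zero hysum.ne')
  have hpos := vecMul_pos hy hysum (mul_pos hσ hc) fun i j => (hB i j).1
  set r := fun j => (x ᵥ* B) j / (y ᵥ* B) j
  have har : ∀ j, a ≤ r j := fun j =>
    (le_div_iff₀ (hpos j)).2 (h.vecMul (fun i j => (mul_pos hσ hc).le.trans (hB i j).1) j).1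
  obtain ⟨j₀, hj₀⟩ := Finite.exists_min r
  obtain ⟨j₁, hj₁⟩ := Finite.exists_max r
  refine ⟨r j₀, r j₁, har j₀, hj₀ j₁, ?_, fun j => ⟨(le_div_iff₀ (hpos j)).1 (hj₀ j),
    (div_le_iff₀ (hpos j)).1 (hj₁ j)⟩⟩
  have hstep := h.vecMul_div_le hy hysum hσ hc hB j₁ j₀
  nlinarith [mul_nonneg (sub_nonneg.2 (pow_le_one₀ hσ.le hσ₁ : σ ^ 2 ≤ 1)) (sub_nonneg.2 (har j₀))]

end RatioBetween

end Nonneg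

theorem log_sub_log_mem_Icc {a b u v : ℝ} (ha : 0 < a) (hv : 0 < v)
    (hu : u ∈ Set.Icc (a * v) (b * v)) :
    Real.log u - Real.log v ∈ Set.Icc (Real.log a) (Real.log b) := by
  have hu0 : 0 < u := (mul_pos ha hv).trans_le hu.1
  rw [← Real.log_div hu0.ne' hv.ne']
  exact ⟨Real.log_le_log ha ((le_div_iff₀ hv).2 hu.1),
    Real.log_le_log (div_pos hu0 hv) ((div_le_iff₀ hv).2 hu.2)⟩

theorem abs_log_div_sub_log_div_le {a b p q r s : ℝ} (ha : 0 < a) (hq : 0 < q) (hs : 0 < s)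
    (hp : p ∈ Set.Icc (a * q) (b * q)) (hr : r ∈ Set.Icc (a * s) (b * s)) :
    |Real.log (p / r) - Real.log (q / s)| ≤ Real.log b - Real.log a := by
  have hpq := log_sub_log_mem_Icc ha hq hp
  have hrs := log_sub_log_mem_Icc ha hs hr
  rw [Real.log_div ((mul_pos ha hq).trans_le hp.1).ne' ((mul_pos ha hs).trans_le hr.1).ne',
    Real.log_div hq.ne' hs.ne', sub_sub_sub_comm]
  exact abs_sub_le_of_le_of_le hpq.1 hpq.2 hrs.1 hrs.2

theorem log_sub_log_le_sub_div {a b : ℝ} (ha : 0 < a) (hb : 0 < b) :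
    Real.log b - Real.log a ≤ (b - a) / a := by
  rw [← Real.log_div hb.ne' ha.ne', sub_div, div_self ha.ne']
  exact Real.log_le_sub_one_of_pos (div_pos hb ha)

theorem pow_div_mul_le_pow {ρ : ℝ} (h₀ : 0 ≤ ρ) (h₁ : ρ ≤ 1) {l : ℕ} (hl : 0 < l) (k : ℕ) :
    (ρ ^ l) ^ (k / l) * ρ ^ l ≤ ρ ^ k := by
  rw [← pow_succ, ← pow_mul]
  exact pow_le_pow_of_le_one h₀ h₁ (Nat.lt_mul_div_succ k hl).le

theorem sum_Ioc_mul_eq_sum_sum {α : Type*} [AddCommMonoid α] (f : ℕ → α) (k : ℕ) {a B : ℕ}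
    (h : a ≤ B) :
    ∑ t ∈ Ioc (a * k) (B * k), f t = ∑ b ∈ Ioc a B, ∑ t ∈ Ioc ((b - 1) * k) (b * k), f t := by
  induction B, h using Nat.le_induction with
  | base => simp
  | succ B hB ih =>
    rw [sum_Ioc_succ_top hB, ← ih, Nat.add_sub_cancel, sum_Ioc_consecutive _
      (Nat.mul_le_mul_right k hB) (Nat.mul_le_mul_right k (Nat.le_succ B))]

theorem abs_sum_blocks_le {f : ℕ → ℕ → ℝ} {c : ℝ} (hc : 0 ≤ c) {k B : ℕ} (hB : 2 ≤ B)
    (hf : ∀ b ∈ Ioc 2 B, ∀ t ∈ Ioc ((b - 1) * k) (b * k), |f b t| ≤ c) :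
    |∑ b ∈ Ioc 2 B, ∑ t ∈ Ioc ((b - 1) * k) (b * k), f b t| ≤ (B * k : ℕ) * c :=
  calc _ ≤ ∑ b ∈ Ioc 2 B, ∑ t ∈ Ioc ((b - 1) * k) (b * k), c :=
        (abs_sum_le_sum_abs _ _).trans
          (sum_le_sum fun b hb => (abs_sum_le_sum_abs _ _).trans (sum_le_sum (hf b hb)))
    _ = ∑ t ∈ Ioc (2 * k) (B * k), c := (sum_Ioc_mul_eq_sum_sum _ k hB).symm
    _ ≤ (B * k : ℕ) * c := by
        rw [sum_const, Nat.card_Ioc, nsmul_eq_mul]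
        exact mul_le_mul_of_nonneg_right (Nat.cast_le.2 (Nat.sub_le _ _)) hc

section ProbVec

variable {N : ℕ}

theorem isProbVec_probNormalize {v : Fin N → ℝ} (hv : ∀ i, 0 ≤ v i) (hs : 0 < ∑ i, v i) :
    IsProbVec (probNormalize v) :=
  ⟨fun i => div_nonneg (hv i) hs.le, by simp only [probNormalize, ← sum_div, div_self hs.ne']⟩

theorem IsProbVec.probNormalize_eq {v : Fin N → ℝ} (hv : IsProbVec v) : probNormalize v = v := by
  funext i
  rw [probNormalize, hv.2, div_one]

theorem probNormalize_eq_smul (v : Fin N → ℝ) : probNormalize v = (∑ i, v i)⁻¹ • v := by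
  funext i
  rw [probNormalize, Pi.smul_apply, smul_eq_mul, div_eq_inv_mul]

theorem probNormalize_smul (v : Fin N → ℝ) {c : ℝ} (hc : c ≠ 0) :
    probNormalize (c • v) = probNormalize v := by
  funext j
  simp only [probNormalize, Pi.smul_apply, smul_eq_mul, ← mul_sum]
  exact mul_div_mul_left _ _ hc

theorem probNormalize_probNormalize_vecMul {u : Fin N → ℝ} (hu : ∑ i, u i ≠ 0)
    (A : Matrix (Fin N) (Fin N) ℝ) :
    probNormalize (probNormalize u ᵥ* A) = probNormalize (u ᵥ* A) := by
  rw [probNormalize_eq_smul u, smul_vecMul, probNormalize_smul _ (inv_ne_zero hu)]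

theorem IsProbVec.vecMul {v : Fin N → ℝ} (hv : IsProbVec v) {A : Matrix (Fin N) (Fin N) ℝ}
    (hA : IsRowStochastic A) : IsProbVec (v ᵥ* A) := by
  have hA' := mem_rowStochastic_iff_sum.2 hA
  refine ⟨nonneg_vecMul_of_mem_rowStochastic hA' hv.1, ?_⟩
  simpa [dotProduct_one] using
    vecMul_dotProduct_one_eq_one_rowStochastic hA' (by simpa [dotProduct_one] using hv.2)

theorem ratioBetween_vecMul_of_entries {x y : Fin N → ℝ} (hx : IsProbVec x) (hy : IsProbVec y)
    {σ c : ℝ} (hσ : 0 < σ) {B : Matrix (Fin N) (Fin N) ℝ}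
    (hB : ∀ i j, σ * c ≤ B i j ∧ B i j ≤ c) : RatioBetween σ σ⁻¹ (x ᵥ* B) (y ᵥ* B) := by
  intro j
  have hxB := sum_mul_mem_Icc hx.1 fun i => hB i j
  have hyB := sum_mul_mem_Icc hy.1 fun i => hB i j
  rw [hx.2, mul_one, mul_one] at hxB
  rw [hy.2, mul_one, mul_one] at hyB
  refine ⟨(mul_le_mul_of_nonneg_left hyB.2 hσ.le).trans hxB.1, hxB.2.trans ?_⟩
  rw [← inv_mul_cancel_left₀ hσ.ne' c]
  exact mul_le_mul_of_nonneg_left hyB.1 (inv_nonneg.2 hσ.le)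

end ProbVec

section Forward

variable {N : ℕ}

noncomputable def stepProd (Γ : ℕ → Matrix (Fin N) (Fin N) ℝ) (w : ℕ → Fin N → ℝ) (t n : ℕ) :
    Matrix (Fin N) (Fin N) ℝ :=
  ((List.range n).map fun s => Γ (t + s) * diagonal (w (t + s))).prod

def IsRegularWindow (Γ : ℕ → Matrix (Fin N) (Fin N) ℝ) (w : ℕ → Fin N → ℝ) (m M : ℝ)
    (t n : ℕ) : Prop :=
  ∀ τ, t ≤ τ → τ < t + n → IsRowStochastic (Γ τ) ∧ ∀ j, m ≤ w τ j ∧ w τ j ≤ M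

variable {Γ : ℕ → Matrix (Fin N) (Fin N) ℝ} {w : ℕ → Fin N → ℝ} {m M : ℝ}

theorem IsRegularWindow.mono {t n t' n' : ℕ} (h : IsRegularWindow Γ w m M t n) (h₁ : t ≤ t')
    (h₂ : t' + n' ≤ t + n) : IsRegularWindow Γ w m M t' n' :=
  fun τ hτ₁ hτ₂ => h τ (h₁.trans hτ₁) (by omega)

theorem stepProd_succ (Γ : ℕ → Matrix (Fin N) (Fin N) ℝ) (w : ℕ → Fin N → ℝ) (t n : ℕ) :
    stepProd Γ w t (n + 1) = stepProd Γ w t n * (Γ (t + n) * diagonal (w (t + n))) := by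
  simp [stepProd, List.range_succ]

theorem stepProd_add (Γ : ℕ → Matrix (Fin N) (Fin N) ℝ) (w : ℕ → Fin N → ℝ) (t p q : ℕ) :
    stepProd Γ w t (p + q) = stepProd Γ w t p * stepProd Γ w (t + p) q := by
  induction q with
  | zero => simp [stepProd]
  | succ q ih => rw [← add_assoc, stepProd_succ, ih, stepProd_succ, mul_assoc, add_assoc]

theorem matProd_succ (Γ : ℕ → Matrix (Fin N) (Fin N) ℝ) (t n : ℕ) :
    matProd Γ t (n + 1) = matProd Γ t n * Γ (t + n) := by
  simp [matProd, List.range_succ]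

theorem IsRegularWindow.isRowStochastic_matProd {t n : ℕ} (h : IsRegularWindow Γ w m M t n) :
    IsRowStochastic (matProd Γ t n) :=
  mem_rowStochastic_iff_sum.1 <| Submonoid.list_prod_mem _ <| List.forall_mem_map.2 fun s hs =>
    mem_rowStochastic_iff_sum.2 (h (t + s) (by omega) (by simpa using List.mem_range.1 hs)).1

theorem pow_mul_matProd_le_stepProd (hm : 0 < m) {t n : ℕ} (h : IsRegularWindow Γ w m M t n)
    (i j : Fin N) : m ^ n * matProd Γ t n i j ≤ stepProd Γ w t n i j := by
  induction n generalizing i j with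
  | zero => simp [stepProd, matProd]
  | succ n ih =>
    have h' : IsRegularWindow Γ w m M t n := h.mono le_rfl (by omega)
    have hτ := h (t + n) (by omega) (by omega)
    rw [matProd_succ, stepProd_succ, pow_succ, ← smul_eq_mul (m ^ n * m), ← Matrix.smul_apply,
      ← smul_mul_smul_comm]
    refine mul_apply_le_mul_apply
      (fun i j => mul_nonneg (by positivity) (h'.isRowStochastic_matProd.1 i j))
      (ih h') (fun i j => mul_nonneg hm.le (hτ.1.1 i j)) (fun i j => ?_) i j
    rw [mul_diagonal, mul_comm m]
    exact mul_le_mul_of_nonneg_left (hτ.2 j).1 (hτ.1.1 i j)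

theorem stepProd_nonneg (hm : 0 < m) {t n : ℕ} (h : IsRegularWindow Γ w m M t n) (i j : Fin N) :
    0 ≤ stepProd Γ w t n i j :=
  (mul_nonneg (by positivity) (h.isRowStochastic_matProd.1 i j)).trans
    (pow_mul_matProd_le_stepProd hm h i j)

theorem stepProd_le_pow_mul_matProd (hm : 0 < m) {t n : ℕ} (h : IsRegularWindow Γ w m M t n)
    (i j : Fin N) : stepProd Γ w t n i j ≤ M ^ n * matProd Γ t n i j := by
  induction n generalizing i j with
  | zero => simp [stepProd, matProd]
  | succ n ih =>
    have h' : IsRegularWindow Γ w m M t n := h.mono le_rfl (by omega)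
    have hτ := h (t + n) (by omega) (by omega)
    rw [matProd_succ, stepProd_succ, pow_succ, ← smul_eq_mul (M ^ n * M), ← Matrix.smul_apply,
      ← smul_mul_smul_comm]
    refine mul_apply_le_mul_apply (stepProd_nonneg hm h') (ih h') (fun i j => ?_) (fun i j => ?_)
      i j
    all_goals rw [mul_diagonal]
    · exact mul_nonneg (hτ.1.1 i j) (hm.le.trans (hτ.2 j).1)
    · rw [Matrix.smul_apply, smul_eq_mul, mul_comm M]
      exact mul_le_mul_of_nonneg_left (hτ.2 j).2 (hτ.1.1 i j)

theorem stepProd_mem_Icc {ε σ : ℝ} (hm : 0 < m) (hmM : m ≤ M) {t l : ℕ}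
    (h : IsRegularWindow Γ w m M t l) (hprim : ∀ i j, ε ≤ matProd Γ t l i j)
    (hσε : σ * M ^ l ≤ m ^ l * ε) (i j : Fin N) :
    stepProd Γ w t l i j ∈ Set.Icc (σ * M ^ l) (M ^ l) :=
  ⟨hσε.trans ((mul_le_mul_of_nonneg_left (hprim i j) (by positivity)).trans
      (pow_mul_matProd_le_stepProd hm h i j)),
    (stepProd_le_pow_mul_matProd hm h i j).trans (mul_le_of_le_one_right
      (pow_nonneg (hm.le.trans hmM) l)
      (le_one_of_mem_rowStochastic (mem_rowStochastic_iff_sum.2 h.isRowStochastic_matProd)))⟩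

theorem sum_vecMul_stepProd_pos (hm : 0 < m) {t n : ℕ} (h : IsRegularWindow Γ w m M t n)
    {y : Fin N → ℝ} (hy : IsProbVec y) : 0 < ∑ j, (y ᵥ* stepProd Γ w t n) j :=
  calc 0 < m ^ n * ∑ j, (y ᵥ* matProd Γ t n) j := by
        rw [(hy.vecMul h.isRowStochastic_matProd).2, mul_one]; positivity
    _ = ∑ j, (y ᵥ* (m ^ n • matProd Γ t n)) j := by simp [vecMul_smul, mul_sum]
    _ ≤ ∑ j, (y ᵥ* stepProd Γ w t n) j :=
        sum_le_sum fun j _ => vecMul_le_vecMul hy.1 (pow_mul_matProd_le_stepProd hm h) j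

theorem fwdVec_eq_vecMul (A : Matrix (Fin N) (Fin N) ℝ) (u v : Fin N → ℝ) :
    fwdVec A u v = v ᵥ* (A * diagonal u) := by
  funext j
  simp [fwdVec, vecMul, dotProduct, mul_diagonal, sum_mul, mul_assoc]

theorem contrib_eq_sum_vecMul (v : Fin N → ℝ) (t : ℕ) :
    contrib Γ w v t = ∑ j, (v ᵥ* (Γ t * diagonal (w t))) j := by
  rw [← fwdVec_eq_vecMul]
  rfl

theorem contrib_probNormalize (u : Fin N → ℝ) (t : ℕ) :
    contrib Γ w (probNormalize u) t = (∑ j, (u ᵥ* (Γ t * diagonal (w t))) j) / ∑ i, u i := by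
  rw [contrib_eq_sum_vecMul, probNormalize_eq_smul, smul_vecMul]
  simp [← mul_sum, div_eq_inv_mul]

theorem contrib_mem_Icc {v : Fin N → ℝ} (hv : IsProbVec v) {t : ℕ} (hΓ : IsRowStochastic (Γ t))
    (hw : ∀ j, m ≤ w t j ∧ w t j ≤ M) : contrib Γ w v t ∈ Set.Icc m M := by
  have h := sum_mul_mem_Icc (hv.vecMul hΓ).1 hw
  rw [(hv.vecMul hΓ).2, mul_one, mul_one] at h
  exact h

theorem abs_log_contrib_sub_le (hm : 0 < m) {t : ℕ} (hΓ : IsRowStochastic (Γ t))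
    (hw : ∀ j, m ≤ w t j ∧ w t j ≤ M) {x y : Fin N → ℝ} (hx : IsProbVec x) (hy : IsProbVec y) :
    |Real.log (contrib Γ w x t) - Real.log (contrib Γ w y t)| ≤ Real.log M - Real.log m := by
  have hcx := contrib_mem_Icc hx hΓ hw
  have hcy := contrib_mem_Icc hy hΓ hw
  exact abs_sub_le_of_le_of_le (Real.log_le_log hm hcx.1)
    (Real.log_le_log (hm.trans_le hcx.1) hcx.2) (Real.log_le_log hm hcy.1)
    (Real.log_le_log (hm.trans_le hcy.1) hcy.2)

theorem fwdRun_add (s p q : ℕ) (v : Fin N → ℝ) :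
    fwdRun Γ w s v (p + q) = fwdRun Γ w (s + p) (fwdRun Γ w s v p) q := by
  induction q with
  | zero => rfl
  | succ q ih => rw [← add_assoc, fwdRun, ih, fwdRun, add_assoc s p q]

theorem fwdRun_isProbVec (hm : 0 < m) {s n : ℕ} (h : IsRegularWindow Γ w m M (s + 1) n)
    {v : Fin N → ℝ} (hv : IsProbVec v) : IsProbVec (fwdRun Γ w s v n) := by
  induction n with
  | zero => exact hv
  | succ n ih =>
    have hτ := h (s + n + 1) (by omega) (by omega)
    have hu := ih (h.mono le_rfl (by omega))
    exact isProbVec_probNormalize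
      (fun j => mul_nonneg ((hu.vecMul hτ.1).1 j) (hm.le.trans (hτ.2 j).1))
      (hm.trans_le (contrib_mem_Icc hu hτ.1 hτ.2).1)

theorem fwdRun_eq_probNormalize (hm : 0 < m) {s n : ℕ} (h : IsRegularWindow Γ w m M (s + 1) n)
    {v : Fin N → ℝ} (hv : IsProbVec v) :
    fwdRun Γ w s v n = probNormalize (v ᵥ* stepProd Γ w (s + 1) n) := by
  induction n with
  | zero => simp [fwdRun, stepProd, hv.probNormalize_eq]
  | succ n ih =>
    have h' : IsRegularWindow Γ w m M (s + 1) n := h.mono le_rfl (by omega)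
    rw [fwdRun, ih h', fwdVec_eq_vecMul,
      probNormalize_probNormalize_vecMul (sum_vecMul_stepProd_pos hm h' hv).ne', vecMul_vecMul,
      stepProd_succ, add_right_comm s 1 n]

theorem phi_add (δ : Fin N → ℝ) {s : ℕ} (hs : 1 ≤ s) (n : ℕ) :
    phi δ Γ w (s + n) = fwdRun Γ w s (phi δ Γ w s) n := by
  simp only [phi]
  rw [show s + n - 1 = s - 1 + n by omega, fwdRun_add, show 1 + (s - 1) = s by omega]

theorem phi_isProbVec (hm : 0 < m) {δ : Fin N → ℝ} (hδ : IsProbVec δ)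
    (hw₁ : ∀ j, m ≤ w 1 j ∧ w 1 j ≤ M) {s : ℕ} (h : IsRegularWindow Γ w m M 2 (s - 1)) :
    IsProbVec (phi δ Γ w s) := by
  have hsum := (sum_mul_mem_Icc hδ.1 hw₁).1
  rw [hδ.2, mul_one] at hsum
  exact fwdRun_isProbVec hm h
    (isProbVec_probNormalize (fun j => mul_nonneg (hδ.1 j) (hm.le.trans (hw₁ j).1))
      (hm.trans_le hsum))

end Forward

section Truncation

variable {N l : ℕ} {Γ : ℕ → Matrix (Fin N) (Fin N) ℝ} {w : ℕ → Fin N → ℝ} {m M ε σ : ℝ}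

theorem exists_ratioBetween_vecMul_stepProd (hm : 0 < m) (hmM : m ≤ M) (hσ : 0 < σ)
    (hσ₁ : σ ≤ 1) (hσε : σ * M ^ l ≤ m ^ l * ε) {x y : Fin N → ℝ} (hx : IsProbVec x)
    (hy : IsProbVec y) {t p : ℕ} (hp : 1 ≤ p) (h : IsRegularWindow Γ w m M t (p * l))
    (hprim : ∀ i < p, ∀ a b, ε ≤ matProd Γ (t + i * l) l a b) :
    ∃ a b, σ ≤ a ∧ a ≤ b ∧ b - a ≤ (1 - σ ^ 2) ^ p / σ ∧
      RatioBetween a b (x ᵥ* stepProd Γ w t (p * l)) (y ᵥ* stepProd Γ w t (p * l)) := by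
  induction p, hp using Nat.le_induction with
  | base =>
    rw [one_mul] at h ⊢
    refine ⟨σ, σ⁻¹, le_rfl, hσ₁.trans ((one_le_inv₀ hσ).2 hσ₁), le_of_eq (by field_simp),
      ratioBetween_vecMul_of_entries hx hy hσ
        (stepProd_mem_Icc hm hmM h (by simpa using hprim 0 one_pos) hσε)⟩
  | succ p hp ih =>
    rw [add_one_mul] at h ⊢
    have h' : IsRegularWindow Γ w m M t (p * l) := h.mono le_rfl (by omega)
    obtain ⟨a, b, hσa, -, hgap, hr⟩ := ih h' fun i hi => hprim i (by omega)
    obtain ⟨a', b', haa', hab', hgap', hr'⟩ := hr.exists_contract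
      (vecMul_nonneg hy.1 (stepProd_nonneg hm h'))
      (sum_vecMul_stepProd_pos hm h' hy) hσ hσ₁ (pow_pos (hm.trans_le hmM) l)
      (stepProd_mem_Icc hm hmM (h.mono (by omega) (by omega)) (hprim p (by omega))
        hσε)
    refine ⟨a', b', hσa.trans haa', hab', ?_, ?_⟩
    · calc b' - a' ≤ (1 - σ ^ 2) * (b - a) := hgap'
        _ ≤ (1 - σ ^ 2) * ((1 - σ ^ 2) ^ p / σ) :=
          mul_le_mul_of_nonneg_left hgap (sub_nonneg.2 (pow_le_one₀ hσ.le hσ₁))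
        _ = (1 - σ ^ 2) ^ (p + 1) / σ := by ring
    · rwa [stepProd_add, ← vecMul_vecMul, ← vecMul_vecMul]

theorem abs_log_contrib_fwdRun_sub_le_log_sub_log (hm : 0 < m) {s n : ℕ}
    (h : IsRegularWindow Γ w m M (s + 1) (n + 1)) {x y : Fin N → ℝ} (hx : IsProbVec x)
    (hy : IsProbVec y) {a b : ℝ} (ha : 0 < a)
    (hr : RatioBetween a b (x ᵥ* stepProd Γ w (s + 1) n) (y ᵥ* stepProd Γ w (s + 1) n)) :
    |Real.log (contrib Γ w (fwdRun Γ w s x n) (s + n + 1)) -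
      Real.log (contrib Γ w (fwdRun Γ w s y n) (s + n + 1))| ≤ Real.log b - Real.log a := by
  have h' : IsRegularWindow Γ w m M (s + 1) n := h.mono le_rfl (by omega)
  have hτ := h (s + n + 1) (by omega) (by omega)
  have hstep : ∀ v : Fin N → ℝ, v ᵥ* stepProd Γ w (s + 1) n ᵥ* (Γ (s + n + 1) *
      diagonal (w (s + n + 1))) = v ᵥ* stepProd Γ w (s + 1) (n + 1) := fun v => by
    rw [vecMul_vecMul, stepProd_succ, add_right_comm s 1 n]
  have hr' := hr.vecMul (A := Γ (s + n + 1) * diagonal (w (s + n + 1))) fun i j => by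
    rw [mul_diagonal]; exact mul_nonneg (hτ.1.1 i j) (hm.le.trans (hτ.2 j).1)
  rw [hstep, hstep] at hr'
  rw [fwdRun_eq_probNormalize hm h' hx, fwdRun_eq_probNormalize hm h' hy, contrib_probNormalize,
    contrib_probNormalize, hstep, hstep]
  exact abs_log_div_sub_log_div_le ha (sum_vecMul_stepProd_pos hm h hy)
    (sum_vecMul_stepProd_pos hm h' hy) hr'.sum hr.sum

theorem abs_log_contrib_fwdRun_sub_le (hm : 0 < m) (hmM : m ≤ M) (hσ : 0 < σ) (hσ₁ : σ ≤ 1)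
    (hσε : σ * M ^ l ≤ m ^ l * ε) {s n : ℕ} (h : IsRegularWindow Γ w m M (s + 1) (n + 1))
    (hprim : ∀ τ, s + 1 ≤ τ → τ + l ≤ s + 1 + n → ∀ i j, ε ≤ matProd Γ τ l i j)
    {x y : Fin N → ℝ} (hx : IsProbVec x) (hy : IsProbVec y) :
    |Real.log (contrib Γ w (fwdRun Γ w s x n) (s + n + 1)) -
      Real.log (contrib Γ w (fwdRun Γ w s y n) (s + n + 1))| ≤
      (σ⁻¹ ^ 2 + (Real.log M - Real.log m)) * (1 - σ ^ 2) ^ (n / l) := by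
  have hlog : 0 ≤ Real.log M - Real.log m := sub_nonneg.2 (Real.log_le_log hm hmM)
  have hθ : 0 ≤ 1 - σ ^ 2 := sub_nonneg.2 (pow_le_one₀ hσ.le hσ₁)
  have h' : IsRegularWindow Γ w m M (s + 1) n := h.mono le_rfl (by omega)
  rcases Nat.eq_zero_or_pos (n / l) with hp | hp
  · have hτ := h (s + n + 1) (by omega) (by omega)
    rw [hp, pow_zero, mul_one]
    exact (abs_log_contrib_sub_le hm hτ.1 hτ.2 (fwdRun_isProbVec hm h' hx)
      (fwdRun_isProbVec hm h' hy)).trans (le_add_of_nonneg_left (by positivity))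
  · set p := n / l
    have hpl : p * l ≤ n := Nat.div_mul_le_self n l
    obtain ⟨a, b, hσa, hab, hgap, hr⟩ := exists_ratioBetween_vecMul_stepProd hm hmM hσ hσ₁ hσε
      hx hy hp (h.mono le_rfl (by omega)) fun i hi a b => hprim _ (by omega) (by
        have : (i + 1) * l ≤ p * l := Nat.mul_le_mul_right l hi
        rw [add_one_mul] at this
        omega) a b
    have hr' := hr.vecMul (stepProd_nonneg hm (h'.mono (t' := s + 1 + p * l) (n' := n - p * l)
      (by omega) (by omega)))
    rw [vecMul_vecMul, vecMul_vecMul, ← stepProd_add, Nat.add_sub_cancel' hpl] at hr'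
    have ha : 0 < a := hσ.trans_le hσa
    calc _ ≤ Real.log b - Real.log a :=
          abs_log_contrib_fwdRun_sub_le_log_sub_log hm h hx hy ha hr'
      _ ≤ (b - a) / a := log_sub_log_le_sub_div ha (ha.trans_le hab)
      _ ≤ (1 - σ ^ 2) ^ p / σ / σ := div_le_div₀ (by positivity) hgap hσ hσa
      _ = σ⁻¹ ^ 2 * (1 - σ ^ 2) ^ p := by field_simp
      _ ≤ _ := mul_le_mul_of_nonneg_right (le_add_of_nonneg_right hlog) (by positivity)

end Truncation

theorem loglik_sub_bandedLoglik {N : ℕ} (δ ρ : Fin N → ℝ) (Γ : ℕ → Matrix (Fin N) (Fin N) ℝ)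
    (w : ℕ → Fin N → ℝ) {k B : ℕ} (hk : 1 ≤ k) (hB : 2 ≤ B) :
    loglik δ Γ w (B * k) - bandedLoglik δ ρ Γ w k B =
      ∑ b ∈ Ioc 2 B, ∑ t ∈ Ioc ((b - 1) * k) (b * k),
        (Real.log (contrib Γ w (phi δ Γ w (t - 1)) t) -
          Real.log (contrib Γ w (fwdRun Γ w ((b - 2) * k) ρ (t - 1 - (b - 2) * k)) t)) := by
  rw [loglik, bandedLoglik, show Icc 2 (B * k) = Ioc 1 (B * k) from Icc_add_one_left_eq_Ioc _ _,
    show Icc 2 (2 * k) = Ioc 1 (2 * k) from Icc_add_one_left_eq_Ioc _ _,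
    ← sum_Ioc_consecutive _ (by omega : 1 ≤ 2 * k) (Nat.mul_le_mul_right k hB),
    sum_Ioc_mul_eq_sum_sum _ k hB, show Icc 3 B = Ioc 2 B from Icc_add_one_left_eq_Ioc _ _]
  simp only [Icc_add_one_left_eq_Ioc, sum_sub_distrib]
  ring

theorem abs_log_contrib_phi_sub_fwdRun_le {N l : ℕ} {Γ : ℕ → Matrix (Fin N) (Fin N) ℝ}
    {w : ℕ → Fin N → ℝ} {m M ε σ : ℝ} (hm : 0 < m) (hmM : m ≤ M) (hσ : 0 < σ) (hσ₁ : σ ≤ 1)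
    (hσε : σ * M ^ l ≤ m ^ l * ε) {δ ρ : Fin N → ℝ} (hδ : IsProbVec δ) (hρ : IsProbVec ρ)
    {k B : ℕ} (hk : 1 ≤ k) (hΓ : ∀ t, 2 ≤ t → t ≤ B * k → IsRowStochastic (Γ t))
    (hw : ∀ t j, 1 ≤ t → t ≤ B * k → m ≤ w t j ∧ w t j ≤ M)
    (hprim : ∀ t, 2 ≤ t → t + l - 1 ≤ B * k → ∀ i j, ε ≤ matProd Γ t l i j)
    {b t : ℕ} (hb : b ∈ Ioc 2 B) (ht : t ∈ Ioc ((b - 1) * k) (b * k)) :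
    |Real.log (contrib Γ w (phi δ Γ w (t - 1)) t) -
        Real.log (contrib Γ w (fwdRun Γ w ((b - 2) * k) ρ (t - 1 - (b - 2) * k)) t)| ≤
      (σ⁻¹ ^ 2 + (Real.log M - Real.log m)) * (1 - σ ^ 2) ^ (k / l) := by
  obtain ⟨hb₂, hbB⟩ := mem_Ioc.1 hb
  obtain ⟨ht₁, ht₂⟩ := mem_Ioc.1 ht
  set s := (b - 2) * k
  have hs : (b - 1) * k = s + k := by rw [show b - 1 = b - 2 + 1 by omega, add_one_mul]
  have hks : k ≤ s := Nat.le_mul_of_pos_left k (by omega)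
  have hbk : b * k ≤ B * k := Nat.mul_le_mul_right k hbB
  obtain ⟨n, rfl⟩ : ∃ n, t = s + n + 1 := ⟨t - 1 - s, by omega⟩
  simp only [Nat.add_sub_cancel, Nat.add_sub_cancel_left]
  have hwin : IsRegularWindow Γ w m M 2 (s + n) := fun τ h₁ h₂ =>
    ⟨hΓ τ h₁ (by omega), fun j => hw τ j (by omega) (by omega)⟩
  rw [phi_add δ (by omega)]
  refine (abs_log_contrib_fwdRun_sub_le hm hmM hσ hσ₁ hσε (hwin.mono (by omega) (by omega))
    (fun τ h₁ h₂ => hprim τ (by omega) (by omega)) (phi_isProbVec hm hδ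
      (fun j => hw 1 j le_rfl (by omega)) (hwin.mono le_rfl (by omega))) hρ).trans ?_
  have hθ₀ : 0 ≤ 1 - σ ^ 2 := sub_nonneg.2 (pow_le_one₀ hσ.le hσ₁)
  exact mul_le_mul_of_nonneg_left
    (pow_le_pow_of_le_one hθ₀ (sub_le_self _ (sq_nonneg σ)) (Nat.div_le_div_right (by omega)))
    (add_nonneg (by positivity) (sub_nonneg.2 (Real.log_le_log hm hmM)))

theorem banded_forward_geometric_decay_general
    (N l : ℕ) (hl : 1 ≤ l) (ε m M : ℝ)
    (hε : 0 < ε) (hm : 0 < m) (hmM : m ≤ M) :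
    ∃ C : ℝ, 0 < C ∧ ∃ ρ₀ : ℝ, 0 < ρ₀ ∧ ρ₀ < 1 ∧
      ∀ (T B k : ℕ) (δ ρ : Fin N → ℝ)
        (Γ : ℕ → Matrix (Fin N) (Fin N) ℝ) (w : ℕ → Fin N → ℝ),
        1 ≤ k → 3 ≤ B → T = B * k →
        IsProbVec δ → IsProbVec ρ →
        (∀ t, 2 ≤ t → t ≤ T → IsRowStochastic (Γ t)) →
        (∀ t j, 1 ≤ t → t ≤ T → m ≤ w t j ∧ w t j ≤ M) →
        (∀ t, 2 ≤ t → t + l - 1 ≤ T → ∀ i j, ε ≤ matProd Γ t l i j) →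
        |loglik δ Γ w T - bandedLoglik δ ρ Γ w k B| ≤ (T : ℝ) * C * ρ₀ ^ k := by
  obtain ⟨σ, hσ, hσ_half, hσε⟩ : ∃ σ : ℝ, 0 < σ ∧ σ ≤ 1 / 2 ∧ σ * M ^ l ≤ m ^ l * ε :=
    have hM := hm.trans_le hmM
    ⟨min (m ^ l * ε / M ^ l) (1 / 2), by positivity, min_le_right _ _,
      (le_div_iff₀ (by positivity)).1 (min_le_left _ _)⟩
  set θ := 1 - σ ^ 2
  have hθ : 0 < θ ∧ θ < 1 := ⟨by nlinarith, by nlinarith⟩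
  set ρ₀ := θ ^ (l⁻¹ : ℝ)
  have hρ₀ : 0 < ρ₀ := Real.rpow_pos_of_pos hθ.1 _
  have hρ₀l : ρ₀ ^ l = θ := Real.rpow_inv_natCast_pow hθ.1.le (by omega)
  set C₀ := σ⁻¹ ^ 2 + (Real.log M - Real.log m)
  have hC₀ : 0 < C₀ := add_pos_of_pos_of_nonneg (by positivity)
    (sub_nonneg.2 (Real.log_le_log hm hmM))
  refine ⟨C₀ / θ, div_pos hC₀ hθ.1, ρ₀, hρ₀, Real.rpow_lt_one hθ.1.le hθ.2 (by positivity), ?_⟩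
  rintro T B k δ ρ Γ w hk hB rfl hδ hρ hΓ hw hprim
  rw [loglik_sub_bandedLoglik δ ρ Γ w hk (by omega), mul_assoc]
  refine abs_sum_blocks_le (mul_pos (div_pos hC₀ hθ.1) (pow_pos hρ₀ k)).le (by omega)
    fun b hb t ht => ?_
  calc _ ≤ C₀ * θ ^ (k / l) := abs_log_contrib_phi_sub_fwdRun_le hm hmM hσ (by linarith) hσε
        hδ hρ hk hΓ hw hprim hb ht
    _ ≤ C₀ / θ * ρ₀ ^ k := by
        rw [div_mul_eq_mul_div, le_div_iff₀ hθ.1, mul_assoc, ← hρ₀l]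
        exact mul_le_mul_of_nonneg_left (pow_div_mul_le_pow hρ₀.le
          (Real.rpow_le_one hθ.1.le hθ.2.le (by positivity)) (by omega) k) hC₀.le

/-- Under the block-primitivity assumption there are constants
`C > 0` and `ρ₀ ∈ (0,1)`, depending only on `N`, `l`, `ε`, `m` and `M` (in
particular independent of `k`, `T`, the transition matrices, the emission
weights and the initial vectors `δ`, `ρ`), such that
`|ℓ_T − ℓ̃_T| ≤ T · C · ρ₀ ^ k`. -/
theorem banded_forward_geometric_decay
    (N l : ℕ) (hN : 1 ≤ N) (hl : 1 ≤ l) (ε m M : ℝ)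
    (hε : 0 < ε) (hm : 0 < m) (hmM : m ≤ M) :
    ∃ C : ℝ, 0 < C ∧ ∃ ρ₀ : ℝ, 0 < ρ₀ ∧ ρ₀ < 1 ∧
      ∀ (T B k : ℕ) (δ ρ : Fin N → ℝ)
        (Γ : ℕ → Matrix (Fin N) (Fin N) ℝ) (w : ℕ → Fin N → ℝ),
        1 ≤ k → 3 ≤ B → T = B * k →
        IsProbVec δ → IsProbVec ρ →
        (∀ t, 2 ≤ t → t ≤ T → IsRowStochastic (Γ t)) →
        (∀ t j, 1 ≤ t → t ≤ T → m ≤ w t j ∧ w t j ≤ M) →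
        (∀ t, 2 ≤ t → t + l - 1 ≤ T → ∀ i j, ε ≤ matProd Γ t l i j) →
        |loglik δ Γ w T - bandedLoglik δ ρ Γ w k B| ≤ (T : ℝ) * C * ρ₀ ^ k :=
  banded_forward_geometric_decay_general N l hl ε m M hε hm hmM
end

section
/- Bandedness of the Hessian of the banded log-likelihood: let f_1,…,f_N : ℝ → (0,∞) be twice continuously differentiable state-dependent density functions and regard the banded log-likelihood ℓ̃_T as a function of the observation vector x = (x_1,…,x_T) ∈ ℝ^T by setting P_t = diag(f_1(x_t),…,f_N(x_t)). Then for any two time indices s and t whose block indices ⌈s/k⌉ and ⌈t/k⌉ differ by at least 2, the mixed second partial derivative ∂²ℓ̃_T/∂x_s∂x_t vanishes identically on ℝ^T. -/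
open Finset

/-!
Each summand of the banded log-likelihood is a function of the observations in one window
`((b-2)k, bk]` of two consecutive blocks: the head is the exact likelihood of blocks 1–2,
and the summands of block `b ≥ 3` only see the forward recursion restarted at `(b-2)k`.
Observations whose block indices differ by at least two never share such a window, so, as a
function of `(x_s, x_t)`, every summand depends on only one of the two variables. The
log-likelihood is therefore of the form `g(x_s) + h(x_t)`, and `∂/∂x_t` of such a function
does not depend on `x_s`.
-/

open Function

def IsAddSeparable {α β M : Type*} [Add M] (L : α → β → M) : Prop :=
  ∃ (g : α → M) (h : β → M), ∀ a b, L a b = g a + h b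

namespace IsAddSeparable

variable {α β M : Type*}

lemma add [AddCommSemigroup M] {L L' : α → β → M} (hL : IsAddSeparable L)
    (hL' : IsAddSeparable L') : IsAddSeparable fun a b => L a b + L' a b := by
  obtain ⟨g, h, hgh⟩ := hL
  obtain ⟨g', h', hgh'⟩ := hL'
  exact ⟨g + g', h + h', fun a b => by
    simp only [hgh, hgh', Pi.add_apply, add_add_add_comm]⟩

lemma finset_sum [AddCommMonoid M] {κ : Type*} (I : Finset κ) {L : κ → α → β → M}
    (hL : ∀ i ∈ I, IsAddSeparable (L i)) : IsAddSeparable fun a b => ∑ i ∈ I, L i a b := by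
  choose g h hgh using hL
  exact ⟨fun a => ∑ i ∈ I.attach, g i.1 i.2 a, fun b => ∑ i ∈ I.attach, h i.1 i.2 b,
    fun a b => by
      show ∑ i ∈ I, L i a b = _
      rw [← sum_add_distrib, ← sum_attach I]
      exact sum_congr rfl fun i _ => hgh _ _ _ _⟩

lemma deriv_deriv_eq_zero {𝕜 F : Type*} [NontriviallyNormedField 𝕜] [NormedAddCommGroup F]
    [NormedSpace 𝕜 F] {L : 𝕜 → 𝕜 → F} (hL : IsAddSeparable L) (u v : 𝕜) :
    deriv (fun a => deriv (L a) v) u = 0 := by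
  obtain ⟨g, h, hgh⟩ := hL
  have hconst : ∀ a, deriv (L a) v = deriv h v := fun a => by
    rw [show L a = fun b => g a + h b from funext (hgh a), deriv_const_add]
  simp only [hconst, deriv_const]

end IsAddSeparable

section DependsOn

variable {ι β : Type*} {α : ι → Type*} {S : Set ι}

lemma DependsOn.add [Add β] {F G : (Π i, α i) → β} (hF : DependsOn F S) (hG : DependsOn G S) :
    DependsOn (fun x => F x + G x) S :=
  fun _ _ hxy => by simp only [hF hxy, hG hxy]

lemma DependsOn.finset_sum [AddCommMonoid β] {κ : Type*} (I : Finset κ)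
    {F : κ → (Π i, α i) → β} (hF : ∀ c ∈ I, DependsOn (F c) S) :
    DependsOn (fun x => ∑ c ∈ I, F c x) S :=
  fun _ _ hxy => sum_congr rfl fun c hc => hF c hc hxy

lemma DependsOn.comp_left {γ : Type*} {F : (Π i, α i) → β} (hF : DependsOn F S) (g : β → γ) :
    DependsOn (g ∘ F) S :=
  fun _ _ hxy => congrArg g (hF hxy)

lemma DependsOn.comp_piMap {γ : ι → Type*} {F : (Π i, α i) → β} (hF : DependsOn F S)
    (φ : Π i, γ i → α i) : DependsOn (fun y => F (Pi.map φ y)) S :=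
  fun _ _ hxy => hF fun i hi => congrArg (φ i) (hxy i hi)

lemma DependsOn.isAddSeparable_update [DecidableEq ι] {M : Type*} [AddZeroClass M]
    {γ : Type*} {G : (ι → γ) → M} (hG : DependsOn G S) {s t : ι} (hst : s ∉ S ∨ t ∉ S)
    (x : ι → γ) : IsAddSeparable fun a b => G (Function.update (Function.update x s a) t b) := by
  rcases hst with hs | ht
  · refine ⟨0, fun b => G (Function.update (Function.update x s (x s)) t b), fun a b => ?_⟩
    rw [Pi.zero_apply, zero_add]
    refine hG fun i hi => ?_
    have his : i ≠ s := ne_of_mem_of_not_mem hi hs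
    by_cases hit : i = t
    · simp only [hit, update_self]
    · simp only [update_of_ne hit, update_of_ne his]
  · refine ⟨fun a => G (Function.update (Function.update x s a) t (x t)), 0, fun a b => ?_⟩
    rw [Pi.zero_apply, add_zero]
    exact hG fun i hi => by simp only [update_of_ne (ne_of_mem_of_not_mem hi ht)]

end DependsOn

section ForwardRecursion

variable {N : ℕ} (Γ : ℕ → Matrix (Fin N) (Fin N) ℝ)

lemma dependsOn_fwdRun {S : Set ℕ} {V : (ℕ → Fin N → ℝ) → Fin N → ℝ} (hV : DependsOn V S)
    (start : ℕ) {n : ℕ} (hS : Set.Ioc start (start + n) ⊆ S) :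
    DependsOn (fun w => fwdRun Γ w start (V w) n) S := by
  induction n with
  | zero => exact hV
  | succ n ih =>
    intro w w' hww'
    have hlast : start + n + 1 ∈ S := hS ⟨by omega, by omega⟩
    simp only [fwdRun]
    have hrun : fwdRun Γ w start (V w) n = fwdRun Γ w' start (V w') n :=
      ih ((Set.Ioc_subset_Ioc_right (by omega)).trans hS) hww'
    rw [hrun, hww' _ hlast]

lemma dependsOn_contrib {S : Set ℕ} {V : (ℕ → Fin N → ℝ) → Fin N → ℝ} (hV : DependsOn V S)
    {t : ℕ} (ht : t ∈ S) : DependsOn (fun w => contrib Γ w (V w) t) S :=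
  fun _ _ hww' => by simp only [contrib, hV hww', hww' t ht]

lemma dependsOn_phi (δ : Fin N → ℝ) {m : ℕ} (hm : 1 ≤ m) :
    DependsOn (fun w => phi δ Γ w m) (Set.Ioc 0 m) := by
  have hinit : DependsOn (fun w : ℕ → Fin N → ℝ => probNormalize fun j => δ j * w 1 j)
      (Set.Ioc 0 m) :=
    fun _ _ hww' => by simp only [hww' 1 ⟨Nat.one_pos, hm⟩]
  exact dependsOn_fwdRun Γ hinit 1 (Set.Ioc_subset_Ioc (Nat.zero_le 1) (by omega))

end ForwardRecursion

section BandedLoglik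

variable {N : ℕ} (Γ : ℕ → Matrix (Fin N) (Fin N) ℝ)

noncomputable def headLoglik (δ : Fin N → ℝ) (w : ℕ → Fin N → ℝ) (k : ℕ) : ℝ :=
  Real.log (∑ j, δ j * w 1 j)
    + ∑ t ∈ Icc 2 (2 * k), Real.log (contrib Γ w (phi δ Γ w (t - 1)) t)

noncomputable def blockLoglik (ρ : Fin N → ℝ) (w : ℕ → Fin N → ℝ) (k b : ℕ) : ℝ :=
  ∑ t ∈ Icc ((b - 1) * k + 1) (b * k),
    Real.log (contrib Γ w (fwdRun Γ w ((b - 2) * k) ρ (t - 1 - (b - 2) * k)) t)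

lemma bandedLoglik_eq_headLoglik_add_sum (δ ρ : Fin N → ℝ) (w : ℕ → Fin N → ℝ) (k B : ℕ) :
    bandedLoglik δ ρ Γ w k B
      = headLoglik Γ δ w k + ∑ b ∈ Icc 3 B, blockLoglik Γ ρ w k b :=
  rfl

lemma dependsOn_headLoglik (δ : Fin N → ℝ) {k : ℕ} (hk : 1 ≤ k) :
    DependsOn (fun w => headLoglik Γ δ w k) (Set.Ioc 0 (2 * k)) := by
  have h1 : 1 ∈ Set.Ioc 0 (2 * k) := ⟨Nat.one_pos, by omega⟩
  refine DependsOn.add (fun _ _ hww' => by simp only [hww' 1 h1]) ?_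
  refine DependsOn.finset_sum _ fun t ht => ?_
  rw [mem_Icc] at ht
  have hphi := (dependsOn_phi Γ δ (m := t - 1) (by omega)).mono
    (Set.Ioc_subset_Ioc_right (by omega : t - 1 ≤ 2 * k))
  exact DependsOn.comp_left (dependsOn_contrib Γ hphi ⟨by omega, ht.2⟩) Real.log

lemma dependsOn_blockLoglik (ρ : Fin N → ℝ) (k c : ℕ) :
    DependsOn (fun w => blockLoglik Γ ρ w k (c + 2)) (Set.Ioc (c * k) ((c + 2) * k)) := by
  refine DependsOn.finset_sum _ fun t ht => ?_
  simp only [mem_Icc, Nat.add_sub_cancel, show c + 2 - 1 = c + 1 by omega] at ht ⊢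
  have hck : c * k ≤ (c + 1) * k := Nat.mul_le_mul_right k (Nat.le_succ c)
  have hrun := dependsOn_fwdRun Γ (S := Set.Ioc (c * k) ((c + 2) * k))
    (V := fun _ => ρ) (fun _ _ _ => rfl) (c * k) (n := t - 1 - c * k)
    (Set.Ioc_subset_Ioc_right (by omega))
  exact DependsOn.comp_left (dependsOn_contrib Γ hrun ⟨by omega, ht.2⟩) Real.log

end BandedLoglik

/-- `(m + k - 1) / k = ⌈m / k⌉` is the index of the block of length `k` containing time `m`. -/
lemma blockIndex_mem_of_mem_Ioc {k c m : ℕ} (hk : 0 < k)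
    (hm : m ∈ Set.Ioc (c * k) ((c + 2) * k)) :
    c + 1 ≤ (m + k - 1) / k ∧ (m + k - 1) / k ≤ c + 2 := by
  obtain ⟨hlo, hhi⟩ := hm
  constructor
  · rw [Nat.le_div_iff_mul_le hk, add_mul, one_mul]
    omega
  · rw [← Nat.lt_succ_iff, Nat.div_lt_iff_lt_mul hk, Nat.succ_mul]
    omega

lemma notMem_Ioc_or_notMem_Ioc_of_blockIndex {k s t : ℕ} (hk : 0 < k)
    (hblock : (s + k - 1) / k + 2 ≤ (t + k - 1) / k ∨ (t + k - 1) / k + 2 ≤ (s + k - 1) / k)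
    (c : ℕ) : s ∉ Set.Ioc (c * k) ((c + 2) * k) ∨ t ∉ Set.Ioc (c * k) ((c + 2) * k) := by
  by_contra! h
  have hs := blockIndex_mem_of_mem_Ioc hk h.1
  have ht := blockIndex_mem_of_mem_Ioc hk h.2
  omega

theorem banded_loglik_hessian_banded_general
    (N B k : ℕ) (hk : 1 ≤ k)
    (δ ρ : Fin N → ℝ)
    (Γ : ℕ → Matrix (Fin N) (Fin N) ℝ)
    (f : Fin N → ℝ → ℝ)
    (s t : ℕ)
    (hblock : (s + k - 1) / k + 2 ≤ (t + k - 1) / k ∨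
              (t + k - 1) / k + 2 ≤ (s + k - 1) / k) :
    ∀ (x : ℕ → ℝ) (u v : ℝ),
      deriv (fun u' : ℝ =>
        deriv (fun v' : ℝ =>
          bandedLoglik δ ρ Γ
            (fun τ j => f j (Function.update (Function.update x s u') t v' τ)) k B) v) u
        = 0 := by
  intro x u v
  have hsep := notMem_Ioc_or_notMem_Ioc_of_blockIndex hk hblock
  let obs : Π _ : ℕ, ℝ → Fin N → ℝ := fun _ r j => f j r
  refine IsAddSeparable.deriv_deriv_eq_zero ?_ u v
  simp only [bandedLoglik_eq_headLoglik_add_sum]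
  refine IsAddSeparable.add ?_ (IsAddSeparable.finset_sum _ fun b hb => ?_)
  · exact DependsOn.isAddSeparable_update
      (DependsOn.comp_piMap (dependsOn_headLoglik Γ δ hk) obs) (by simpa using hsep 0) x
  · obtain ⟨c, rfl⟩ : ∃ c, b = c + 2 := ⟨b - 2, by grind⟩
    exact DependsOn.isAddSeparable_update
      (DependsOn.comp_piMap (dependsOn_blockLoglik Γ ρ k c) obs) (hsep c) x

/-- Bandedness of the Hessian of the banded log-likelihood: with
strictly positive, twice continuously differentiable state-dependent density
functions `f_1, …, f_N : ℝ → (0,∞)` and `P_t = diag(f_1(x_t), …, f_N(x_t))`, for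
any two time indices `s`, `t` whose block indices `⌈s/k⌉ = (s+k-1)/k` and
`⌈t/k⌉ = (t+k-1)/k` differ by at least `2`, the mixed second partial derivative
`∂²ℓ̃_T/∂x_s∂x_t` vanishes identically on `ℝ^T`. -/
theorem banded_loglik_hessian_banded
    (N T B k : ℕ) (hN : 1 ≤ N) (hk : 1 ≤ k) (hB : 3 ≤ B) (hT : T = B * k)
    (δ ρ : Fin N → ℝ) (hδ : IsProbVec δ) (hρ : IsProbVec ρ)
    (Γ : ℕ → Matrix (Fin N) (Fin N) ℝ)
    (hΓ : ∀ τ, 2 ≤ τ → τ ≤ T → IsRowStochastic (Γ τ))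
    (f : Fin N → ℝ → ℝ)
    (hf : ∀ j, ContDiff ℝ 2 (f j)) (hfpos : ∀ j x, 0 < f j x)
    (s t : ℕ) (hs1 : 1 ≤ s) (hsT : s ≤ T) (ht1 : 1 ≤ t) (htT : t ≤ T)
    (hblock : (s + k - 1) / k + 2 ≤ (t + k - 1) / k ∨
              (t + k - 1) / k + 2 ≤ (s + k - 1) / k) :
    ∀ (x : ℕ → ℝ) (u v : ℝ),
      deriv (fun u' : ℝ =>
        deriv (fun v' : ℝ =>
          bandedLoglik δ ρ Γ
            (fun τ j => f j (Function.update (Function.update x s u') t v' τ)) k B) v) u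
        = 0 :=
  banded_loglik_hessian_banded_general N B k hk δ ρ Γ f s t hblock
end
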